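/- In the Černý automaton C_n on states {0, 1, ..., n−1} with letter a acting as the cyclic shift i ↦ i+1 (mod n) and letter b fixing all states except b(n−1) = 0 (equivalently b(0)=1 on the standard presentation), the word (a b^{n-1})^{n-2} a, suitably presented, of length (n−1)² is synchronizing. -/
import Mathlib

/-- Extension of the transition function of a DFA to words. -/
def actW {Q A : Type*} (δ : Q → A → Q) (q : Q) (w : List A) : Q := w.foldl δ q

/-- Alphabet of the Černý automaton. -/
inductive CLetter | a | b
deriving DecidableEq

/-- Transition function of the Černý automaton C_n on states `ZMod n`:
`a` is the cyclic shift, `b` moves 0 to 1 and fixes all other states. -/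
def cernyδ (n : ℕ) : ZMod n → CLetter → ZMod n
  | i, CLetter.a => i + 1
  | i, CLetter.b => if i = 0 then 1 else i

/-- The Černý word `(b a^{n-1})^{n-2} b` of length `(n-1)²`. -/
def cernyWord (n : ℕ) : List CLetter :=
  (List.replicate (n - 2) (CLetter.b :: List.replicate (n - 1) CLetter.a)).flatten ++
    [CLetter.b]

lemma actW_append {Q A : Type*} (δ : Q → A → Q) (q : Q) (u v : List A) :
    actW δ q (u ++ v) = actW δ (actW δ q u) v := List.foldl_append ..

lemma actW_replicate_a (n m : ℕ) (q : ZMod n) :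
    actW (cernyδ n) q (List.replicate m CLetter.a) = q + m := by
  induction m generalizing q with
  | zero => simp [actW]
  | succ k ih =>
      rw [List.replicate_succ]
      show actW (cernyδ n) (cernyδ n q CLetter.a) _ = _
      rw [ih]
      simp only [cernyδ, Nat.cast_succ]
      ring

lemma actW_block (n : ℕ) (hn : 2 ≤ n) (q : ZMod n) :
    actW (cernyδ n) q (CLetter.b :: List.replicate (n - 1) CLetter.a) =
      (if q = 0 then 1 else q) - 1 := by
  show actW (cernyδ n) (cernyδ n q CLetter.b) _ = _
  rw [actW_replicate_a]
  have h : ((n - 1 : ℕ) : ZMod n) = -1 := by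
    have : ((n - 1 : ℕ) : ZMod n) = (n : ZMod n) - 1 := by
      push_cast [Nat.cast_sub (by omega : 1 ≤ n)]; ring
    simp [this]
  rw [h, cernyδ]
  ring

lemma actW_blocks (n : ℕ) (hn : 2 ≤ n) (k : ℕ) (q : ZMod n) :
    actW (cernyδ n) q
      ((List.replicate k (CLetter.b :: List.replicate (n - 1) CLetter.a)).flatten) =
      if q.val ≤ k then 0 else q - (k : ZMod n) := by
  haveI : NeZero n := ⟨by omega⟩
  induction k generalizing q with
  | zero =>
      simp only [List.replicate_zero, List.flatten_nil, Nat.le_zero]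
      rw [show actW (cernyδ n) q [] = q from rfl]
      split
      · next h => rw [(ZMod.val_eq_zero q).1 h]
      · simp
  | succ k ih =>
      rw [List.replicate_succ', List.flatten_append, actW_append, ih]
      simp only [List.flatten_cons, List.flatten_nil, List.append_nil]
      rcases le_or_gt q.val k with h | h
      · rw [if_pos h, actW_block n hn, if_pos rfl, if_pos (Nat.le_succ_of_le h)]
        ring
      · have hqn : q.val < n := ZMod.val_lt q
        have hkn : k < n := lt_trans h hqn
        have hne : q - (k : ZMod n) ≠ 0 := by
          rw [sub_ne_zero]
          intro hq
          have : q.val = (k : ZMod n).val := by rw [hq]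
          rw [ZMod.val_cast_of_lt hkn] at this
          omega
        rw [if_neg (by omega), actW_block n hn, if_neg hne]
        rcases Nat.lt_or_ge (k + 1) q.val with h2 | h2
        · rw [if_neg (by omega)]
          push_cast
          ring
        · have hq : q.val = k + 1 := by omega
          rw [if_pos (by omega)]
          have hqe : q = ((k + 1 : ℕ) : ZMod n) := by
            conv_lhs => rw [← ZMod.natCast_zmod_val q, hq]
          rw [hqe]
          push_cast
          ring

/-- In the Černý automaton C_n, the word `(b a^{n-1})^{n-2} b` has length `(n-1)²`
and is synchronizing. -/
theorem cerny_word_synchronizing (n : ℕ) (hn : 2 ≤ n) :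
    (cernyWord n).length = (n - 1) ^ 2 ∧
      ∃ s : ZMod n, ∀ q : ZMod n, actW (cernyδ n) q (cernyWord n) = s := by
  haveI : NeZero n := ⟨by omega⟩
  constructor
  · obtain ⟨m, rfl⟩ : ∃ m, n = m + 2 := ⟨n - 2, by omega⟩
    simp only [cernyWord, List.length_append, List.length_flatten, List.map_replicate,
      List.length_cons, List.length_replicate, List.sum_replicate, smul_eq_mul,
      List.length_singleton]
    have h1 : m + 2 - 1 = m + 1 := by omega
    have h2 : m + 2 - 2 = m := by omega
    rw [h1, h2]
    simp
    ring
  · refine ⟨1, fun q => ?_⟩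
    rw [cernyWord, actW_append, actW_blocks n hn]
    have h1 : (1 : ZMod n) ≠ 0 := by
      haveI : Fact (1 < n) := ⟨by omega⟩
      exact one_ne_zero
    rcases le_or_gt q.val (n - 2) with h | h
    · rw [if_pos h]
      show cernyδ n 0 CLetter.b = 1
      simp [cernyδ]
    · rw [if_neg (by omega)]
      have hqn : q.val < n := ZMod.val_lt q
      have hq : q.val = n - 1 := by omega
      have hq' : q = ((n - 1 : ℕ) : ZMod n) := by
        conv_lhs => rw [← ZMod.natCast_zmod_val q, hq]
      have key : q - ((n - 2 : ℕ) : ZMod n) = 1 := by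
        rw [hq', ← Nat.cast_sub (by omega : n - 2 ≤ n - 1),
          show n - 1 - (n - 2) = 1 from by omega, Nat.cast_one]
      rw [key]
      show cernyδ n 1 CLetter.b = 1
      simp [cernyδ, h1]
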